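/- arXiv:2410.02113 — 5 statements merged into one kernel-verified Lean document; each statement's English description precedes it below -/
import Mathlib

section
/- Let A be an invertible n×n real matrix, B an n×m real matrix, and Δ > 0. Then the zero-order-hold input matrix (Δ•A)⁻¹ · (exp(Δ•A) - 1) · (Δ•B) agrees with the Euler input matrix Δ•B up to second order: ‖(Δ•A)⁻¹ · (exp(Δ•A) - 1) · (Δ•B) - Δ•B‖ ≤ (Δ^2 · ‖A‖ · ‖B‖ / 2) · exp(Δ·‖A‖). -/
/-!
Write `exp x - 1 = x φ₁(x)` with the entire series `φ₁(x) = ∑ xᵏ / (k + 1)!`. For invertible `x`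
the zero-order-hold factor `x⁻¹ (exp x - 1)` is then `φ₁(x)`, and
`‖φ₁(x) - 1‖ ≤ ∑_{k ≥ 1} ‖x‖ᵏ / (k + 1)! ≤ (‖x‖ / 2) exp ‖x‖`,
since `(k + 1)! ≥ 2 (k - 1)!` for `k ≥ 1`. Take `x = Δ A` and multiply by `Δ B`.
-/

open scoped Matrix.Norms.L2Operator Nat

namespace NormedSpace

variable {𝔸 : Type*} [NormedRing 𝔸] [NormedAlgebra ℝ 𝔸] [CompleteSpace 𝔸]

/-- The function `φ₁(x) = (exp x - 1) / x` of exponential integrators, as a power series, so that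
it makes sense without inverting `x`. -/
noncomputable def phi₁ (x : 𝔸) : 𝔸 :=
  ∑' k : ℕ, ((k + 1)! : ℝ)⁻¹ • x ^ k

theorem summable_phi₁_series (x : 𝔸) :
    Summable fun k : ℕ => ((k + 1)! : ℝ)⁻¹ • x ^ k := by
  refine .of_norm_bounded (norm_expSeries_summable' (𝕂 := ℝ) x) fun k => ?_
  rw [norm_smul, norm_smul, norm_inv, norm_inv, Real.norm_natCast, Real.norm_natCast]
  gcongr
  exact k.le_succ

theorem mul_phi₁ (x : 𝔸) : x * phi₁ x = exp x - 1 := by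
  rw [← (exp_series_hasSum_exp' (𝕂 := ℝ) x).tsum_eq,
    (expSeries_summable' (𝕂 := ℝ) x).tsum_eq_zero_add, phi₁,
    ← (summable_phi₁_series x).tsum_mul_left]
  simp only [Nat.factorial_zero, Nat.cast_one, inv_one, pow_zero, one_smul, add_sub_cancel_left,
    mul_smul_comm, pow_succ']

theorem phi₁_sub_one (x : 𝔸) :
    phi₁ x - 1 = ∑' k : ℕ, ((k + 2)! : ℝ)⁻¹ • x ^ (k + 1) := by
  rw [phi₁, (summable_phi₁_series x).tsum_eq_zero_add]
  simp

theorem norm_phi₁_sub_one_le (x : 𝔸) : ‖phi₁ x - 1‖ ≤ ‖x‖ / 2 * Real.exp ‖x‖ := by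
  have hexp : HasSum (fun k : ℕ => ‖x‖ / 2 * ((k ! : ℝ)⁻¹ * ‖x‖ ^ k)) (‖x‖ / 2 * Real.exp ‖x‖) := by
    rw [Real.exp_eq_exp_ℝ]
    exact (exp_series_hasSum_exp' (𝕂 := ℝ) ‖x‖).mul_left _
  rw [phi₁_sub_one]
  refine tsum_of_norm_bounded hexp fun k => ?_
  have hfact : (2 * k ! : ℝ) ≤ (k + 2)! := by
    rw [Nat.factorial_succ, Nat.factorial_succ, ← mul_assoc]
    exact_mod_cast Nat.mul_le_mul_right _ (by nlinarith)
  calc ‖((k + 2)! : ℝ)⁻¹ • x ^ (k + 1)‖ = ((k + 2)! : ℝ)⁻¹ * ‖x ^ (k + 1)‖ := by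
        rw [norm_smul, norm_inv, Real.norm_natCast]
    _ ≤ (2 * k ! : ℝ)⁻¹ * ‖x‖ ^ (k + 1) := by
        gcongr
        exact norm_pow_le' x k.succ_pos
    _ = ‖x‖ / 2 * ((k ! : ℝ)⁻¹ * ‖x‖ ^ k) := by
        rw [pow_succ]
        field_simp

end NormedSpace

open NormedSpace

theorem Matrix.inv_mul_exp_sub_one {ι : Type*} [Fintype ι] [DecidableEq ι]
    {x : Matrix ι ι ℝ} (hx : IsUnit x) : x⁻¹ * (exp x - 1) = phi₁ x := by
  rw [← mul_phi₁, ← mul_assoc, Matrix.nonsing_inv_mul x ((Matrix.isUnit_iff_isUnit_det x).mp hx),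
    one_mul]

/-- The zero-order-hold input matrix `(Δ•A)⁻¹ (exp(Δ•A) - 1) (Δ•B)` agrees
with the Euler input matrix `Δ•B` up to second order, in the operator norms induced by the
Euclidean norms. -/
theorem zoh_input_matrix_close_to_euler (n m : ℕ) (A : Matrix (Fin n) (Fin n) ℝ)
    (hA : IsUnit A) (B : Matrix (Fin n) (Fin m) ℝ) (Δ : ℝ) (hΔ : 0 < Δ) :
    ‖(Δ • A)⁻¹ * (NormedSpace.exp (Δ • A) - 1) * (Δ • B) - Δ • B‖ ≤
      Δ ^ 2 * ‖A‖ * ‖B‖ / 2 * Real.exp (Δ * ‖A‖) := by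
  have hΔA : IsUnit (Δ • A) := hA.smul (Units.mk0 Δ hΔ.ne')
  rw [Matrix.inv_mul_exp_sub_one hΔA]
  calc ‖phi₁ (Δ • A) * (Δ • B) - Δ • B‖ = ‖(phi₁ (Δ • A) - 1) * (Δ • B)‖ := by
        rw [Matrix.sub_mul, Matrix.one_mul]
    _ ≤ ‖phi₁ (Δ • A) - 1‖ * ‖Δ • B‖ := Matrix.l2_opNorm_mul _ _
    _ ≤ ‖Δ • A‖ / 2 * Real.exp ‖Δ • A‖ * ‖Δ • B‖ := by gcongr; exact norm_phi₁_sub_one_le _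
    _ = Δ ^ 2 * ‖A‖ * ‖B‖ / 2 * Real.exp (Δ * ‖A‖) := by
        rw [norm_smul, norm_smul, Real.norm_of_nonneg hΔ.le]
        ring
end

section
/- (Proposition 1, quantitative form.) Let A be an invertible n×n real matrix, B an n×m real matrix, h ∈ ℝ^n, u ∈ ℝ^m, and Δ > 0. Then the zero-order-hold update and the Euler update of the state-space model h' = A h + B u differ by at most second order in Δ: ‖exp(Δ•A)·h + ((Δ•A)⁻¹ · (exp(Δ•A) - 1) · (Δ•B))·u - (h + Δ•(A·h + B·u))‖ ≤ (Δ^2 / 2) · exp(Δ·‖A‖) · (‖A‖^2·‖h‖ + ‖A‖·‖B‖·‖u‖), where M·v denotes the matrix-vector product and ‖·‖ is the operator norm on matrices and the Euclidean norm on vectors. -/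
/-!
With `φ₂(x) = ∑ xᵏ / (k + 2)!` one has `exp x = 1 + x + x² φ₂(x)` and `‖φ₂(x)‖ ≤ e^‖x‖ / 2`.
For `M = Δ A` this gives `M⁻¹ (exp M - 1) = 1 + M φ₂(M)`, so the zero-order-hold update minus
the Euler update is exactly `M² φ₂(M) h + M φ₂(M) (Δ B) u`, and submultiplicativity of the
operator norm bounds it.
-/

open scoped Matrix.Norms.L2Operator Nat
open NormedSpace

lemma Nat.two_mul_factorial_le_factorial_add_two (k : ℕ) : 2 * k ! ≤ (k + 2)! := by
  simpa [mul_comm] using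
    Nat.le_of_dvd (Nat.factorial_pos _) (Nat.factorial_mul_factorial_dvd_factorial_add k 2)

section Phi2

variable {𝔸 : Type*} [NormedRing 𝔸] [NormedAlgebra ℝ 𝔸]

/-- The second φ-function of exponential integrators. -/
noncomputable def phi2 (x : 𝔸) : 𝔸 :=
  ∑' k : ℕ, ((k + 2)! : ℝ)⁻¹ • x ^ k

variable [NormOneClass 𝔸]

lemma norm_phi2_term_le (x : 𝔸) (k : ℕ) :
    ‖((k + 2)! : ℝ)⁻¹ • x ^ k‖ ≤ ‖x‖ ^ k / k ! / 2 := by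
  have hfact : (2 * k ! : ℝ) ≤ (k + 2)! := by
    exact_mod_cast Nat.two_mul_factorial_le_factorial_add_two k
  rw [norm_smul, Real.norm_of_nonneg (by positivity), div_div, mul_comm (k ! : ℝ), inv_mul_eq_div]
  exact div_le_div₀ (by positivity) (norm_pow_le x k) (by positivity) hfact

lemma norm_phi2_le (x : 𝔸) : ‖phi2 x‖ ≤ Real.exp ‖x‖ / 2 := by
  refine tsum_of_norm_bounded ?_ (norm_phi2_term_le x)
  rw [Real.exp_eq_exp_ℝ]
  exact (expSeries_div_hasSum_exp ‖x‖).div_const 2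

variable [CompleteSpace 𝔸]

lemma summable_phi2_series (x : 𝔸) : Summable fun k : ℕ => ((k + 2)! : ℝ)⁻¹ • x ^ k :=
  .of_norm_bounded ((Real.summable_pow_div_factorial ‖x‖).div_const 2) (norm_phi2_term_le x)

lemma exp_eq_one_add_add_sq_mul_phi2 (x : 𝔸) : exp x = 1 + x + x ^ 2 * phi2 x := by
  have hexp := (hasSum_nat_add_iff' 2).mpr (exp_series_hasSum_exp' (𝕂 := ℝ) x)
  have hphi := (summable_phi2_series x).hasSum.mul_left (x ^ 2)
  simp_rw [mul_smul_comm, ← pow_add, add_comm 2] at hphi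
  rw [sub_eq_iff_eq_add'.mp (hexp.unique hphi)]
  simp [phi2, Finset.sum_range_succ]

end Phi2

namespace Matrix

variable {𝕜 : Type*} [RCLike 𝕜] {m n : Type*} [Fintype m] [Fintype n] [DecidableEq n]

lemma norm_toEuclideanLin_apply_le (M : Matrix m n 𝕜) (x : EuclideanSpace 𝕜 n) :
    ‖toEuclideanLin M x‖ ≤ ‖M‖ * ‖x‖ :=
  (toEuclideanLin.trans LinearMap.toContinuousLinearMap M).le_opNorm x

@[simp]
lemma toEuclideanLin_one : toEuclideanLin (1 : Matrix n n 𝕜) = LinearMap.id := by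
  ext x : 1
  simp

variable [Nonempty n]

lemma inv_mul_exp_sub_one_s2 {M : Matrix n n ℝ} (hM : IsUnit M) :
    M⁻¹ * (exp M - 1) = 1 + M * phi2 M := by
  have hfactor : exp M - 1 = M * (1 + M * phi2 M) := by
    rw [exp_eq_one_add_add_sq_mul_phi2]
    noncomm_ring
  rw [hfactor, ← Matrix.mul_assoc, nonsing_inv_mul _ ((isUnit_iff_isUnit_det M).mp hM),
    Matrix.one_mul]

lemma zoh_update_sub_euler_update {k : Type*} [Fintype k] [DecidableEq k] (A : Matrix n n ℝ)
    (B : Matrix n k ℝ) (h : EuclideanSpace ℝ n) (u : EuclideanSpace ℝ k) {Δ : ℝ}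
    (hΔA : IsUnit (Δ • A)) :
    toEuclideanLin (exp (Δ • A)) h + toEuclideanLin ((Δ • A)⁻¹ * (exp (Δ • A) - 1) * (Δ • B)) u -
        (h + Δ • (toEuclideanLin A h + toEuclideanLin B u)) =
      toEuclideanLin ((Δ • A) ^ 2 * phi2 (Δ • A)) h +
        toEuclideanLin ((Δ • A) * phi2 (Δ • A) * (Δ • B)) u := by
  rw [inv_mul_exp_sub_one_s2 hΔA, exp_eq_one_add_add_sq_mul_phi2, Matrix.add_mul, Matrix.one_mul]
  simp only [map_add, map_smul, LinearMap.add_apply, LinearMap.smul_apply, toEuclideanLin_one,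
    LinearMap.id_apply, smul_add]
  abel

end Matrix

/-- **Proposition 1, quantitative form.** The zero-order-hold update and the
Euler update of the state-space model `h' = A h + B u` differ by at most second order in `Δ`.
Matrix–vector products are taken via `Matrix.toEuclideanLin`, so that vectors carry the
Euclidean norm and matrices the induced operator norm. -/
theorem zoh_update_close_to_euler_update (n m : ℕ) (A : Matrix (Fin n) (Fin n) ℝ)
    (hA : IsUnit A) (B : Matrix (Fin n) (Fin m) ℝ) (h : EuclideanSpace ℝ (Fin n))
    (u : EuclideanSpace ℝ (Fin m)) (Δ : ℝ) (hΔ : 0 < Δ) :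
    ‖Matrix.toEuclideanLin (NormedSpace.exp (Δ • A)) h +
        Matrix.toEuclideanLin ((Δ • A)⁻¹ * (NormedSpace.exp (Δ • A) - 1) * (Δ • B)) u -
        (h + Δ • (Matrix.toEuclideanLin A h + Matrix.toEuclideanLin B u))‖ ≤
      Δ ^ 2 / 2 * Real.exp (Δ * ‖A‖) * (‖A‖ ^ 2 * ‖h‖ + ‖A‖ * ‖B‖ * ‖u‖) := by
  -- For `n = 0` the operator norm has `‖1‖ = 0`, so there is no `NormOneClass` to work with.
  rcases isEmpty_or_nonempty (Fin n) with hn | hn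
  · rw [Subsingleton.elim (_ - _ : EuclideanSpace ℝ (Fin n)) 0, norm_zero]
    positivity
  set M := Δ • A
  have hM : IsUnit M := hA.smul (Units.mk0 Δ hΔ.ne')
  have hnorm : ‖M‖ = Δ * ‖A‖ := norm_smul_of_nonneg hΔ.le A
  have hφ : ‖phi2 M‖ ≤ Real.exp (Δ * ‖A‖) / 2 := hnorm ▸ norm_phi2_le M
  have hBnorm : ‖Δ • B‖ = Δ * ‖B‖ := norm_smul_of_nonneg hΔ.le B
  rw [Matrix.zoh_update_sub_euler_update A B h u hM]
  calc _ ≤ ‖M ^ 2 * phi2 M‖ * ‖h‖ + ‖M * phi2 M * (Δ • B)‖ * ‖u‖ :=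
        (norm_add_le _ _).trans (add_le_add (Matrix.norm_toEuclideanLin_apply_le _ _)
          (Matrix.norm_toEuclideanLin_apply_le _ _))
    _ ≤ ‖M‖ ^ 2 * ‖phi2 M‖ * ‖h‖ + ‖M‖ * ‖phi2 M‖ * ‖Δ • B‖ * ‖u‖ := by
        gcongr
        · exact (norm_mul_le _ _).trans (by gcongr; exact norm_pow_le M 2)
        · exact (Matrix.l2_opNorm_mul _ _).trans (by gcongr; exact norm_mul_le _ _)
    _ ≤ (Δ * ‖A‖) ^ 2 * (Real.exp (Δ * ‖A‖) / 2) * ‖h‖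
          + Δ * ‖A‖ * (Real.exp (Δ * ‖A‖) / 2) * (Δ * ‖B‖) * ‖u‖ := by
        rw [hnorm, hBnorm]; gcongr
    _ = Δ ^ 2 / 2 * Real.exp (Δ * ‖A‖) * (‖A‖ ^ 2 * ‖h‖ + ‖A‖ * ‖B‖ * ‖u‖) := by ring
end

section
/- For every n×n real matrix A and every Δ ∈ ℝ, the integrated matrix exponential satisfies (∫ s in 0..Δ, exp(s•A)) * A = exp(Δ•A) - 1, where the integral is the (componentwise) interval integral of the matrix-valued function s ↦ exp(s•A), exp is the matrix exponential, and 1 is the identity matrix. -/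
open scoped Matrix.Norms.L2Operator

open NormedSpace in
theorem integral_exp_smul_mul {𝔸 : Type*} [NormedRing 𝔸] [NormedAlgebra ℝ 𝔸] [CompleteSpace 𝔸]
    (A : 𝔸) (a b : ℝ) :
    (∫ s in a..b, exp (s • A)) * A = exp (b • A) - exp (a • A) := by
  have hderiv (s : ℝ) : HasDerivAt (fun u : ℝ => exp (u • A)) (exp (s • A) * A) s :=
    hasDerivAt_exp_smul_const A s
  have hcont : Continuous fun s : ℝ => exp (s • A) :=
    continuous_iff_continuousAt.2 fun s => (hderiv s).continuousAt
  calc (∫ s in a..b, exp (s • A)) * A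
      = ∫ s in a..b, exp (s • A) * A :=
        ((ContinuousLinearMap.mul ℝ 𝔸).flip A).intervalIntegral_comp_comm
          (hcont.intervalIntegrable a b) |>.symm
    _ = exp (b • A) - exp (a • A) :=
        intervalIntegral.integral_eq_sub_of_hasDerivAt (fun s _ => hderiv s)
          ((hcont.mul continuous_const).intervalIntegrable a b)

/-- The integrated matrix exponential satisfies
`(∫ s in 0..Δ, exp (s • A)) * A = exp (Δ • A) - 1`. -/
theorem integral_exp_smul_mul_eq (n : ℕ) (A : Matrix (Fin n) (Fin n) ℝ) (Δ : ℝ) :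
    (∫ s in (0 : ℝ)..Δ, NormedSpace.exp (s • A)) * A = NormedSpace.exp (Δ • A) - 1 := by
  rw [integral_exp_smul_mul, zero_smul, NormedSpace.exp_zero]
end

section
/- For every invertible n×n real matrix A and every Δ ∈ ℝ, the integrated matrix exponential has the closed form ∫ s in 0..Δ, exp(s•A) = A⁻¹ * (exp(Δ•A) - 1), where the integral is the interval integral of the matrix-valued function s ↦ exp(s•A), exp is the matrix exponential, and 1 is the identity matrix. -/
open scoped Matrix.Norms.L2Operator

theorem mul_integral_exp_smul {𝔸 : Type*} [NormedRing 𝔸] [NormedAlgebra ℝ 𝔸] [CompleteSpace 𝔸]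
    (A : 𝔸) (Δ : ℝ) :
    A * (∫ s in (0 : ℝ)..Δ, NormedSpace.exp (s • A)) = NormedSpace.exp (Δ • A) - 1 := by
  have hcont : Continuous fun s : ℝ => NormedSpace.exp (s • A) :=
    continuous_iff_continuousAt.2 fun s => (hasDerivAt_exp_smul_const (𝕂 := ℝ) A s).continuousAt
  calc A * (∫ s in (0 : ℝ)..Δ, NormedSpace.exp (s • A))
      = ∫ s in (0 : ℝ)..Δ, A * NormedSpace.exp (s • A) :=
        ((ContinuousLinearMap.mul ℝ 𝔸 A).intervalIntegral_comp_comm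
          (hcont.intervalIntegrable 0 Δ)).symm
    _ = NormedSpace.exp (Δ • A) - NormedSpace.exp ((0 : ℝ) • A) :=
        intervalIntegral.integral_eq_sub_of_hasDerivAt
          (fun s _ => hasDerivAt_exp_smul_const' (𝕂 := ℝ) A s)
          ((hcont.const_mul A).intervalIntegrable 0 Δ)
    _ = NormedSpace.exp (Δ • A) - 1 := by rw [zero_smul, NormedSpace.exp_zero]

/-- For invertible `A`, the integrated matrix exponential has the closed form
`∫ s in 0..Δ, exp (s • A) = A⁻¹ * (exp (Δ • A) - 1)`. -/
theorem integral_exp_smul_eq_inv_mul (n : ℕ) (A : Matrix (Fin n) (Fin n) ℝ) (hA : IsUnit A)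
    (Δ : ℝ) :
    (∫ s in (0 : ℝ)..Δ, NormedSpace.exp (s • A)) = A⁻¹ * (NormedSpace.exp (Δ • A) - 1) := by
  have hdet : IsUnit A.det := (Matrix.isUnit_iff_isUnit_det A).mp hA
  rw [← mul_integral_exp_smul, ← mul_assoc, Matrix.nonsing_inv_mul A hdet, one_mul]
end

section
/- Let A be an invertible n×n real matrix, B an n×m real matrix, u ∈ ℝ^m, and h₀ ∈ ℝ^n. Suppose h : ℝ → ℝ^n satisfies h(0) = h₀ and, for every t ∈ ℝ, h has derivative A·h(t) + B·u at t. Then for every Δ ∈ ℝ, h(Δ) = exp(Δ•A)·h₀ + (A⁻¹ * (exp(Δ•A) - 1) * B)·u, where M·v denotes matrix-vector product, exp is the matrix exponential, and 1 is the identity matrix. -/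
open scoped Matrix.Norms.L2Operator

open NormedSpace

/-!
Shifting by the equilibrium offset `c = A⁻¹ B u` (so that `A c = B u`) turns the affine equation
`h' = A h + B u` into the linear one `w' = A w` for `w = h + c`. The curve `t ↦ exp (t A) w₀` solves
the linear equation, so by uniqueness of solutions of ODEs with Lipschitz right-hand side,
`h t = exp (t A) (h₀ + c) - c = exp (t A) h₀ + (exp (t A) - 1) A⁻¹ B u`, and `A⁻¹` commutes with
`exp (t A)`.
-/

section LinearODE

variable {E : Type*} [NormedAddCommGroup E] [NormedSpace ℝ E] [CompleteSpace E]

theorem hasDerivAt_exp_smul_apply (𝒜 : E →L[ℝ] E) (x : E) (t : ℝ) :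
    HasDerivAt (fun s : ℝ => exp (s • 𝒜) x) (𝒜 (exp (t • 𝒜) x)) t :=
  (hasDerivAt_exp_smul_const' 𝒜 t).clm_apply (hasDerivAt_const t x) |>.congr_deriv (by simp)

theorem eq_exp_smul_apply_of_hasDerivAt {𝒜 : E →L[ℝ] E} {w : ℝ → E}
    (hw : ∀ t, HasDerivAt w (𝒜 (w t)) t) (t : ℝ) : w t = exp (t • 𝒜) (w 0) :=
  congrFun (ODE_solution_unique_univ (v := fun _ => 𝒜) (s := fun _ => Set.univ) (t₀ := 0)
    (fun _ => 𝒜.lipschitz.lipschitzOnWith) (fun t => ⟨hw t, trivial⟩)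
    (fun t => ⟨hasDerivAt_exp_smul_apply 𝒜 (w 0) t, trivial⟩) (by simp)) t

theorem eq_exp_smul_apply_add_sub_of_hasDerivAt {𝒜 : E →L[ℝ] E} {c : E} {h : ℝ → E}
    (hode : ∀ t, HasDerivAt h (𝒜 (h t) + 𝒜 c) t) (t : ℝ) :
    h t = exp (t • 𝒜) (h 0 + c) - c := by
  have hshift : ∀ s, HasDerivAt (fun s => h s + c) (𝒜 (h s + c)) s := fun s => by
    simpa only [map_add] using (hode s).add_const c
  exact eq_sub_of_add_eq (eq_exp_smul_apply_of_hasDerivAt hshift t)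

end LinearODE

namespace Matrix

variable {𝕜 n : Type*} [RCLike 𝕜] [Fintype n] [DecidableEq n]

theorem continuous_toEuclideanCLM : Continuous (toEuclideanCLM (n := n) (𝕜 := 𝕜)) :=
  (toEuclideanCLM (n := n) (𝕜 := 𝕜)).toAlgEquiv.toLinearMap.continuous_of_finiteDimensional

theorem toEuclideanCLM_exp (A : Matrix n n 𝕜) :
    toEuclideanCLM (𝕜 := 𝕜) (exp A) = exp (toEuclideanCLM (𝕜 := 𝕜) A) :=
  letI : NormedAlgebra ℚ (Matrix n n 𝕜) := .restrictScalars ℚ 𝕜 _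
  map_exp _ continuous_toEuclideanCLM A

theorem commute_nonsing_inv_exp_smul {A : Matrix n n 𝕜} (hA : IsUnit A.det) (t : 𝕜) :
    Commute A⁻¹ (exp (t • A)) :=
  have hAinv : Commute A⁻¹ A := (nonsing_inv_mul A hA).trans (mul_nonsing_inv A hA).symm
  (hAinv.smul_right t).exp_right

end Matrix

/-- The zero-order-hold discretisation is exact: if `h` solves the linear
state-space ODE `h' t = A · h t + B · u` with `h 0 = h₀` and `A` is invertible, then for every
`Δ`, `h Δ = exp (Δ • A) · h₀ + (A⁻¹ * (exp (Δ • A) - 1) * B) · u`. -/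
theorem ssm_solution_eq_zoh_update (n m : ℕ) (A : Matrix (Fin n) (Fin n) ℝ) (hA : IsUnit A)
    (B : Matrix (Fin n) (Fin m) ℝ) (u : EuclideanSpace ℝ (Fin m))
    (h₀ : EuclideanSpace ℝ (Fin n)) (h : ℝ → EuclideanSpace ℝ (Fin n)) (h0 : h 0 = h₀)
    (hode : ∀ t : ℝ,
      HasDerivAt h (Matrix.toEuclideanLin A (h t) + Matrix.toEuclideanLin B u) t) :
    ∀ Δ : ℝ, h Δ =
      Matrix.toEuclideanLin (NormedSpace.exp (Δ • A)) h₀ +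
        Matrix.toEuclideanLin (A⁻¹ * (NormedSpace.exp (Δ • A) - 1) * B) u := by
  intro Δ
  have hdet : IsUnit A.det := (Matrix.isUnit_iff_isUnit_det A).mp hA
  set c := Matrix.toEuclideanLin (A⁻¹ * B) u
  have hAc : Matrix.toEuclideanLin A c = Matrix.toEuclideanLin B u := by
    rw [← LinearMap.comp_apply, ← Matrix.toLpLin_mul_same,
      Matrix.mul_nonsing_inv_cancel_left A B hdet]
  have hsol := eq_exp_smul_apply_add_sub_of_hasDerivAt (𝒜 := Matrix.toEuclideanCLM (𝕜 := ℝ) A)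
    (fun t => hAc ▸ hode t) Δ
  have hexp : Matrix.toEuclideanCLM (𝕜 := ℝ) (exp (Δ • A)) =
      exp (Δ • Matrix.toEuclideanCLM (𝕜 := ℝ) A) := by
    rw [Matrix.toEuclideanCLM_exp, map_smul]
  have hzoh : A⁻¹ * (exp (Δ • A) - 1) * B = (exp (Δ • A) - 1) * (A⁻¹ * B) := by
    rw [((Matrix.commute_nonsing_inv_exp_smul hdet Δ).sub_right (Commute.one_right _)).eq,
      Matrix.mul_assoc]
  rw [hsol, h0, hzoh, Matrix.toLpLin_mul_same, LinearMap.comp_apply,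
    ← Matrix.coe_toEuclideanCLM_eq_toEuclideanLin, ← Matrix.coe_toEuclideanCLM_eq_toEuclideanLin,
    map_sub, map_one, hexp]
  simp only [ContinuousLinearMap.coe_coe, sub_apply, map_add]
  abel
end
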